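/- The simulation preorder is compositional: if (Γ1;Δ1) ≼_s (Γ2;Δ2), then ((Γ1;Δ1),(Γ;Δ)) ≼_s ((Γ2;Δ2),(Γ;Δ)) for every process state (Γ;Δ). -/

import Mathlib

/-- Formulas of the linear-logic fragment: atoms, 1, ⊗, ⊤, &, atomic-antecedent ⊸, !. -/
inductive Formula : Type where
  | atom : ℕ → Formula
  | one : Formula
  | tensor : Formula → Formula → Formula
  | top : Formula
  | with_ : Formula → Formula → Formula
  | limp : ℕ → Formula → Formula
  | bang : Formula → Formula
deriving DecidableEq

/-- Contexts are finite multisets of formulas. -/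
abbrev Ctx : Type := Multiset Formula

/-- A process state (Γ;Δ): unrestricted context Γ and linear context Δ. -/
abbrev State : Type := Ctx × Ctx

/-- Composition of states: ((Γ1;Δ1),(Γ2;Δ2)) = (Γ1,Γ2; Δ1,Δ2). -/
def State.comp (s t : State) : State := (s.1 + t.1, s.2 + t.2)

/-- DILL derivability Γ;Δ ⊢ A. -/
inductive Derives : Ctx → Ctx → Formula → Prop where
  | init (Γ : Ctx) (a : ℕ) : Derives Γ {Formula.atom a} (Formula.atom a)
  | clone {Γ Δ : Ctx} {A C : Formula} :
      Derives (A ::ₘ Γ) (A ::ₘ Δ) C → Derives (A ::ₘ Γ) Δ C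
  | tensorR {Γ Δ₁ Δ₂ : Ctx} {A B : Formula} :
      Derives Γ Δ₁ A → Derives Γ Δ₂ B → Derives Γ (Δ₁ + Δ₂) (Formula.tensor A B)
  | tensorL {Γ Δ : Ctx} {A B C : Formula} :
      Derives Γ (A ::ₘ B ::ₘ Δ) C → Derives Γ (Formula.tensor A B ::ₘ Δ) C
  | oneR (Γ : Ctx) : Derives Γ 0 Formula.one
  | oneL {Γ Δ : Ctx} {C : Formula} :
      Derives Γ Δ C → Derives Γ (Formula.one ::ₘ Δ) C
  | withR {Γ Δ : Ctx} {A B : Formula} :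
      Derives Γ Δ A → Derives Γ Δ B → Derives Γ Δ (Formula.with_ A B)
  | withL₁ {Γ Δ : Ctx} {A₁ A₂ C : Formula} :
      Derives Γ (A₁ ::ₘ Δ) C → Derives Γ (Formula.with_ A₁ A₂ ::ₘ Δ) C
  | withL₂ {Γ Δ : Ctx} {A₁ A₂ C : Formula} :
      Derives Γ (A₂ ::ₘ Δ) C → Derives Γ (Formula.with_ A₁ A₂ ::ₘ Δ) C
  | topR (Γ Δ : Ctx) : Derives Γ Δ Formula.top
  | limpR {Γ Δ : Ctx} {a : ℕ} {B : Formula} :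
      Derives Γ (Formula.atom a ::ₘ Δ) B → Derives Γ Δ (Formula.limp a B)
  | limpL {Γ Δ₁ Δ₂ : Ctx} {a : ℕ} {B C : Formula} :
      Derives Γ Δ₁ (Formula.atom a) → Derives Γ (B ::ₘ Δ₂) C →
      Derives Γ (Formula.limp a B ::ₘ (Δ₁ + Δ₂)) C
  | bangR {Γ : Ctx} {A : Formula} :
      Derives Γ 0 A → Derives Γ 0 (Formula.bang A)
  | bangL {Γ Δ : Ctx} {A C : Formula} :
      Derives (A ::ₘ Γ) Δ C → Derives Γ (Formula.bang A ::ₘ Δ) C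

/-- The logical preorder (Γ1;Δ1) ≼ₗ (Γ2;Δ2). -/
def LogicalPre (s t : State) : Prop :=
  ∀ (Γ' Δ' : Ctx) (C : Formula),
    Derives (Γ' + s.1) (Δ' + s.2) C → Derives (Γ' + t.1) (Δ' + t.2) C

/-- The reduction relation ⇝ on process states. -/
inductive Red : State → State → Prop where
  | tensor (Γ Δ : Ctx) (A B : Formula) :
      Red (Γ, Formula.tensor A B ::ₘ Δ) (Γ, A ::ₘ B ::ₘ Δ)
  | one (Γ Δ : Ctx) :
      Red (Γ, Formula.one ::ₘ Δ) (Γ, Δ)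
  | with₁ (Γ Δ : Ctx) (A₁ A₂ : Formula) :
      Red (Γ, Formula.with_ A₁ A₂ ::ₘ Δ) (Γ, A₁ ::ₘ Δ)
  | with₂ (Γ Δ : Ctx) (A₁ A₂ : Formula) :
      Red (Γ, Formula.with_ A₁ A₂ ::ₘ Δ) (Γ, A₂ ::ₘ Δ)
  | comm (Γ Δ : Ctx) (a : ℕ) (B : Formula) :
      Red (Γ, Formula.atom a ::ₘ Formula.limp a B ::ₘ Δ) (Γ, B ::ₘ Δ)
  | bang (Γ Δ : Ctx) (A : Formula) :
      Red (Γ, Formula.bang A ::ₘ Δ) (A ::ₘ Γ, Δ)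
  | clone (Γ Δ : Ctx) (A : Formula) :
      Red (A ::ₘ Γ, Δ) (A ::ₘ Γ, A ::ₘ Δ)

/-- ⇝*, the reflexive-transitive closure of reduction. -/
def RedStar : State → State → Prop := Relation.ReflTransGen Red

/-- Labels of the LTS: τ, send !a, receive ?a. -/
inductive Label : Type where
  | tau : Label
  | send : ℕ → Label
  | recv : ℕ → Label
deriving DecidableEq

/-- The labeled transition system on states. -/
inductive Step : State → Label → State → Prop where
  | send (Γ Δ : Ctx) (a : ℕ) :
      Step (Γ, Formula.atom a ::ₘ Δ) (Label.send a) (Γ, Δ)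
  | recv (Γ Δ : Ctx) (a : ℕ) (B : Formula) :
      Step (Γ, Formula.limp a B ::ₘ Δ) (Label.recv a) (Γ, B ::ₘ Δ)
  | comm {s₁ s₁' s₂ s₂' : State} {a : ℕ} :
      Step s₁ (Label.send a) s₁' → Step s₂ (Label.recv a) s₂' →
      Step (State.comp s₁ s₂) Label.tau (State.comp s₁' s₂')
  | tensor (Γ Δ : Ctx) (A B : Formula) :
      Step (Γ, Formula.tensor A B ::ₘ Δ) Label.tau (Γ, A ::ₘ B ::ₘ Δ)
  | one (Γ Δ : Ctx) :
      Step (Γ, Formula.one ::ₘ Δ) Label.tau (Γ, Δ)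
  | with₁ (Γ Δ : Ctx) (A₁ A₂ : Formula) :
      Step (Γ, Formula.with_ A₁ A₂ ::ₘ Δ) Label.tau (Γ, A₁ ::ₘ Δ)
  | with₂ (Γ Δ : Ctx) (A₁ A₂ : Formula) :
      Step (Γ, Formula.with_ A₁ A₂ ::ₘ Δ) Label.tau (Γ, A₂ ::ₘ Δ)
  | bang (Γ Δ : Ctx) (A : Formula) :
      Step (Γ, Formula.bang A ::ₘ Δ) Label.tau (A ::ₘ Γ, Δ)
  | clone (Γ Δ : Ctx) (A : Formula) :
      Step (A ::ₘ Γ, Δ) Label.tau (A ::ₘ Γ, A ::ₘ Δ)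

/-- ⇒τ, the reflexive-transitive closure of —τ→. -/
def WeakTau : State → State → Prop :=
  Relation.ReflTransGen (fun s t => Step s Label.tau t)

/-- Weak transition ⇒β: for β = τ it is ⇒τ, otherwise ⇒τ—β→⇒τ. -/
def WeakStep (s : State) (β : Label) (t : State) : Prop :=
  match β with
  | Label.tau => WeakTau s t
  | _ => ∃ u v, WeakTau s u ∧ Step u β v ∧ WeakTau v t

/-- A label is a "non-receive" label α (i.e., τ or a send). -/
def Label.isNonRecv : Label → Prop
  | Label.recv _ => False
  | _ => True

/-- A relation on states is a simulation. -/
def IsSimulation (R : State → State → Prop) : Prop :=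
  ∀ s t, R s t →
    (s.2 = 0 → ∃ Γ₂' : Ctx, WeakTau t (Γ₂', 0) ∧ R (s.1, 0) (Γ₂', 0)) ∧
    (∀ s₁ s₂ : State, s = State.comp s₁ s₂ →
      ∃ t₁ t₂ : State, WeakTau t (State.comp t₁ t₂) ∧ R s₁ t₁ ∧ R s₂ t₂) ∧
    (∀ (α : Label) (s' : State), α.isNonRecv → Step s α s' →
      ∃ t', WeakStep t α t' ∧ R s' t') ∧
    (∀ (a : ℕ) (s' : State), Step s (Label.recv a) s' →
      ∃ t', WeakTau (t.1, Formula.atom a ::ₘ t.2) t' ∧ R s' t')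

/-- The simulation preorder ≼ₛ. -/
def SimPre (s t : State) : Prop :=
  ∃ R : State → State → Prop, IsSimulation R ∧ R s t

/-- Strong barb: (Γ;Δ)↓a. -/
def Barb (s : State) (a : ℕ) : Prop := Formula.atom a ∈ s.2

/-- Weak barb: (Γ;Δ)⇓a. -/
def WeakBarb (s : State) (a : ℕ) : Prop := ∃ t, RedStar s t ∧ Barb t a

def BarbPreserving (R : State → State → Prop) : Prop :=
  ∀ s t a, R s t → Barb s a → WeakBarb t a

def ReductionClosed (R : State → State → Prop) : Prop :=
  ∀ s t s', R s t → Red s s' → ∃ t', RedStar t t' ∧ R s' t'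

def Compositional (R : State → State → Prop) : Prop :=
  ∀ s t u, R s t → R (State.comp s u) (State.comp t u)

def PartitionPreserving (R : State → State → Prop) : Prop :=
  ∀ s t, R s t →
    (s.2 = 0 → ∃ Γ₂' : Ctx, RedStar t (Γ₂', 0) ∧ R (s.1, 0) (Γ₂', 0)) ∧
    (∀ s₁ s₂ : State, s = State.comp s₁ s₂ →
      ∃ t₁ t₂ : State, RedStar t (State.comp t₁ t₂) ∧ R s₁ t₁ ∧ R s₂ t₂)

/-- The contextual preorder ≼_c: the largest barb-preserving, reduction-closed,
compositional, partition-preserving relation on states. -/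
def CtxPre (s t : State) : Prop :=
  ∃ R : State → State → Prop,
    BarbPreserving R ∧ ReductionClosed R ∧ Compositional R ∧ PartitionPreserving R ∧ R s t

/-- ⊗Δ: the ⊗-conjunction of all formulas in Δ (1 if Δ is empty). -/
noncomputable def bigTensor (Δ : Ctx) : Formula :=
  Δ.toList.foldr Formula.tensor Formula.one

/-- !Γ: prefix every formula of Γ with !. -/
def bangCtx (Γ : Ctx) : Ctx := Γ.map Formula.bang

/-!
If `R` is a simulation, so is the relation `{(p ∘ v, q ∘ v) | p R q}`. A transition of `p ∘ v` is
a transition of `p`, a transition of `v`, or a communication between the two. The first is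
answered by `R`, the second by the same move of `v` inside `q ∘ v`, and for the third `q`
answers the send or receive of `p` (for a receive, by absorbing the message, clause (4)) while
`v` makes its half of the communication. Splits of `p ∘ v` are answered by refining them against
the two given splits, which is possible since multisets have Riesz decomposition.
-/

open Formula

theorem Multiset.exists_add_of_add_eq_add {α : Type*} [DecidableEq α] {A B C D : Multiset α}
    (h : A + B = C + D) :
    ∃ a b c d, A = a + b ∧ B = c + d ∧ C = a + c ∧ D = b + d := by
  have hcount : ∀ x, count x A + count x B = count x C + count x D := fun x => by
    simpa using congrArg (count x) h
  refine ⟨A ∩ C, A - C, C - A, B - (C - A), ?_, ?_, ?_, ?_⟩ <;> ext x <;>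
    simp only [count_add, count_inter, count_sub] <;> grind

namespace State

theorem comp_eq_add (s t : State) : s.comp t = s + t := rfl

theorem exists_add_of_add_eq_add {s₁ s₂ t₁ t₂ : State} (h : s₁ + s₂ = t₁ + t₂) :
    ∃ a b c d : State, s₁ = a + b ∧ s₂ = c + d ∧ t₁ = a + c ∧ t₂ = b + d := by
  obtain ⟨a₁, b₁, c₁, d₁, h₁⟩ := Multiset.exists_add_of_add_eq_add (congrArg Prod.fst h)
  obtain ⟨a₂, b₂, c₂, d₂, h₂⟩ := Multiset.exists_add_of_add_eq_add (congrArg Prod.snd h)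
  exact ⟨(a₁, a₂), (b₁, b₂), (c₁, c₂), (d₁, d₂), by simp [Prod.ext_iff, h₁, h₂]⟩

theorem eq_zero_or_eq_zero_of_add_eq {a b c : State} (h : a + b = c)
    (hc : Multiset.card c.1 + Multiset.card c.2 = 1) : a = 0 ∨ b = 0 := by
  subst h
  simp only [Prod.ext_iff, Prod.fst_add, Prod.snd_add, Multiset.card_add] at hc ⊢
  simp only [Prod.fst_zero, Prod.snd_zero, ← Multiset.card_eq_zero]
  omega

def msg (a : ℕ) : State := (0, {atom a})

theorem add_msg (t : State) (a : ℕ) : t + msg a = (t.1, atom a ::ₘ t.2) := by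
  simp [msg, Prod.ext_iff, add_comm t.2 {atom a}]

end State

open State

/-- Every transition of `Step` other than a communication is one of these inside a context. -/
inductive LocalStep : State → Label → State → Prop where
  | send (a : ℕ) : LocalStep (0, {atom a}) (.send a) 0
  | recv (a : ℕ) (B : Formula) : LocalStep (0, {limp a B}) (.recv a) (0, {B})
  | tensor (A B : Formula) : LocalStep (0, {tensor A B}) .tau (0, {A, B})
  | one : LocalStep (0, {one}) .tau 0
  | with₁ (A₁ A₂ : Formula) : LocalStep (0, {with_ A₁ A₂}) .tau (0, {A₁})
  | with₂ (A₁ A₂ : Formula) : LocalStep (0, {with_ A₁ A₂}) .tau (0, {A₂})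
  | bang (A : Formula) : LocalStep (0, {bang A}) .tau ({A}, 0)
  | clone (A : Formula) : LocalStep ({A}, 0) .tau ({A}, {A})

namespace LocalStep

variable {c c' : State} {α : Label}

theorem card_source (h : LocalStep c α c') : Multiset.card c.1 + Multiset.card c.2 = 1 := by
  cases h <;> simp

theorem step_add (h : LocalStep c α c') (f : State) : Step (c + f) α (c' + f) := by
  obtain ⟨Γ, Δ⟩ := f
  cases h
  · simpa using Step.send Γ Δ _
  · simpa using Step.recv Γ Δ _ _
  · simpa using Step.tensor Γ Δ _ _
  · simpa using Step.one Γ Δ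
  · simpa using Step.with₁ Γ Δ _ _
  · simpa using Step.with₂ Γ Δ _ _
  · simpa using Step.bang Γ Δ _
  · simpa using Step.clone Γ Δ _

/-- A single formula lies on one side of any split of its context. -/
theorem split {f s u : State} (h : LocalStep c α c') (hsu : c + f = s + u) :
    (∃ s', Step s α s' ∧ c' + f = s' + u) ∨ (∃ u', Step u α u' ∧ c' + f = s + u') := by
  obtain ⟨a, b, f₁, f₂, rfl, rfl, rfl, rfl⟩ := State.exists_add_of_add_eq_add hsu
  rcases eq_zero_or_eq_zero_of_add_eq rfl h.card_source with rfl | rfl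
  · rw [zero_add] at h
    exact Or.inr ⟨c' + f₂, h.step_add f₂, by rw [zero_add, add_left_comm]⟩
  · rw [add_zero] at h
    exact Or.inl ⟨c' + f₁, h.step_add f₁, by rw [zero_add, add_assoc]⟩

end LocalStep

namespace Step

variable {s s' u w : State} {α : Label}

theorem localStep_or_comm (h : Step s α w) :
    (∃ c c' f, LocalStep c α c' ∧ s = c + f ∧ w = c' + f) ∨
    ∃ a s₁ s₁' s₂ s₂', α = .tau ∧ Step s₁ (.send a) s₁' ∧ Step s₂ (.recv a) s₂' ∧
      s = s₁ + s₂ ∧ w = s₁' + s₂' := by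
  cases h with
  | comm h₁ h₂ => exact Or.inr ⟨_, _, _, _, _, rfl, h₁, h₂, rfl, rfl⟩
  | send Γ Δ a => exact Or.inl ⟨_, _, (Γ, Δ), .send a, by simp, by simp⟩
  | recv Γ Δ a B => exact Or.inl ⟨_, _, (Γ, Δ), .recv a B, by simp, by simp⟩
  | tensor Γ Δ A B => exact Or.inl ⟨_, _, (Γ, Δ), .tensor A B, by simp, by simp⟩
  | one Γ Δ => exact Or.inl ⟨_, _, (Γ, Δ), .one, by simp, by simp⟩
  | with₁ Γ Δ A₁ A₂ => exact Or.inl ⟨_, _, (Γ, Δ), .with₁ A₁ A₂, by simp, by simp⟩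
  | with₂ Γ Δ A₁ A₂ => exact Or.inl ⟨_, _, (Γ, Δ), .with₂ A₁ A₂, by simp, by simp⟩
  | bang Γ Δ A => exact Or.inl ⟨_, _, (Γ, Δ), .bang A, by simp, by simp⟩
  | clone Γ Δ A => exact Or.inl ⟨_, _, (Γ, Δ), .clone A, by simp, by simp⟩

theorem exists_localStep (h : Step s α w) (hα : α ≠ .tau) :
    ∃ c c' f, LocalStep c α c' ∧ s = c + f ∧ w = c' + f := by
  rcases h.localStep_or_comm with hloc | ⟨_, _, _, _, _, rfl, -⟩
  exacts [hloc, absurd rfl hα]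

theorem add_right (h : Step s α s') (u : State) : Step (s + u) α (s' + u) := by
  rcases h.localStep_or_comm with ⟨c, c', f, hc, rfl, rfl⟩ |
    ⟨a, s₁, s₁', s₂, s₂', rfl, h₁, h₂, rfl, rfl⟩
  · simpa only [add_assoc] using hc.step_add (f + u)
  · obtain ⟨c, c', f, hc, rfl, rfl⟩ := h₂.exists_localStep (by simp)
    simpa only [comp_eq_add, add_assoc] using comm h₁ (hc.step_add (f + u))

theorem add_left (h : Step s α s') (u : State) : Step (u + s) α (u + s') := by
  simpa only [add_comm u] using h.add_right u

theorem send_msg (t : State) (a : ℕ) : Step (t + msg a) (.send a) t := by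
  rw [add_msg]
  exact Step.send t.1 t.2 a

theorem eq_add_msg_of_send {a : ℕ} (h : Step s (.send a) s') : s = s' + msg a := by
  cases h
  rw [add_msg]

theorem of_add_of_ne_tau (h : Step (s + u) α w) (hα : α ≠ .tau) :
    (∃ s', Step s α s' ∧ w = s' + u) ∨ (∃ u', Step u α u' ∧ w = s + u') := by
  obtain ⟨c, c', f, hc, hsu, rfl⟩ := h.exists_localStep hα
  exact hc.split hsu.symm

theorem of_add (h : Step (s + u) α w) :
    (∃ s', Step s α s' ∧ w = s' + u) ∨ (∃ u', Step u α u' ∧ w = s + u') ∨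
    ∃ a s' u', α = .tau ∧ w = s' + u' ∧
      (Step s (.send a) s' ∧ Step u (.recv a) u' ∨ Step s (.recv a) s' ∧ Step u (.send a) u') := by
  rcases h.localStep_or_comm with ⟨c, c', f, hc, hsu, rfl⟩ |
    ⟨a, s₁, s₁', s₂, s₂', rfl, h₁, h₂, hsu, rfl⟩
  · exact (hc.split hsu.symm).imp_right Or.inl
  obtain ⟨x₁, x₂, y₁, y₂, rfl, rfl, rfl, rfl⟩ := State.exists_add_of_add_eq_add hsu
  rcases h₁.of_add_of_ne_tau (by simp) with ⟨x₁', hx₁, rfl⟩ | ⟨y₁', hy₁, rfl⟩ <;>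
  rcases h₂.of_add_of_ne_tau (by simp) with ⟨x₂', hx₂, rfl⟩ | ⟨y₂', hy₂, rfl⟩
  · exact Or.inl ⟨_, comm hx₁ hx₂, add_add_add_comm ..⟩
  · exact Or.inr <| Or.inr
      ⟨a, _, _, rfl, add_add_add_comm .., .inl ⟨hx₁.add_right _, hy₂.add_left _⟩⟩
  · exact Or.inr <| Or.inr
      ⟨a, _, _, rfl, add_add_add_comm .., .inr ⟨hx₂.add_left _, hy₁.add_right _⟩⟩
  · exact Or.inr <| Or.inl ⟨_, comm hy₁ hy₂, add_add_add_comm ..⟩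

theorem weakStep (h : Step s α s') : WeakStep s α s' := by
  cases α with
  | tau => exact .single h
  | send a | recv a => exact ⟨s, s', .refl, h, .refl⟩

end Step

theorem WeakTau.add_right {t t' : State} (h : WeakTau t t') (u : State) :
    WeakTau (t + u) (t' + u) :=
  Relation.ReflTransGen.lift (· + u) (fun _ _ hab => Step.add_right hab u) _ _ h

theorem WeakStep.add_right {t t' : State} {α : Label} (h : WeakStep t α t') (u : State) :
    WeakStep (t + u) α (t' + u) := by
  cases α with
  | tau => exact WeakTau.add_right h u
  | send a | recv a =>
    obtain ⟨m, n, h₁, h₂, h₃⟩ := h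
    exact ⟨m + u, n + u, h₁.add_right u, h₂.add_right u, h₃.add_right u⟩

def compClosure (R : State → State → Prop) (x y : State) : Prop :=
  ∃ p q v, R p q ∧ x = p + v ∧ y = q + v

namespace IsSimulation

variable {R : State → State → Prop} {p q v : State}

theorem compClosure_of_linear_eq_zero (hR : IsSimulation R) (hpq : R p q) (h : (p + v).2 = 0) :
    ∃ Γ', WeakTau (q + v) (Γ', 0) ∧ compClosure R ((p + v).1, 0) (Γ', 0) := by
  obtain ⟨Γv, Δv⟩ := v
  obtain ⟨hp, rfl⟩ := add_eq_zero.mp h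
  obtain ⟨Γ', hq, hR'⟩ := (hR p q hpq).1 hp
  refine ⟨Γ' + Γv, by simpa using hq.add_right (Γv, 0), (p.1, 0), (Γ', 0), (Γv, 0), hR', ?_, ?_⟩ <;>
    simp

theorem compClosure_of_eq_add (hR : IsSimulation R) (hpq : R p q) {s₁ s₂ : State}
    (h : p + v = s₁ + s₂) :
    ∃ t₁ t₂, WeakTau (q + v) (t₁ + t₂) ∧ compClosure R s₁ t₁ ∧ compClosure R s₂ t₂ := by
  obtain ⟨a, b, c, d, rfl, rfl, rfl, rfl⟩ := State.exists_add_of_add_eq_add h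
  obtain ⟨t₁, t₂, hq, h₁, h₂⟩ := (hR _ q hpq).2.1 a b rfl
  exact ⟨t₁ + c, t₂ + d, add_add_add_comm t₁ t₂ c d ▸ hq.add_right (c + d),
    ⟨a, t₁, c, h₁, rfl, rfl⟩, ⟨b, t₂, d, h₂, rfl, rfl⟩⟩

theorem compClosure_of_step (hR : IsSimulation R) (hpq : R p q) {α : Label} {w : State}
    (hα : α.isNonRecv) (h : Step (p + v) α w) :
    ∃ w', WeakStep (q + v) α w' ∧ compClosure R w w' := by
  rcases h.of_add with ⟨p', hp, rfl⟩ | ⟨v', hv, rfl⟩ |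
    ⟨a, p', v', rfl, rfl, ⟨hp, hv⟩ | ⟨hp, hv⟩⟩
  · obtain ⟨q', hq, hR'⟩ := (hR p q hpq).2.2.1 α p' hα hp
    exact ⟨q' + v, hq.add_right v, p', q', v, hR', rfl, rfl⟩
  · exact ⟨q + v', (hv.add_left q).weakStep, p, q, v', hpq, rfl, rfl⟩
  · obtain ⟨q', ⟨m, n, hqm, hmn, hnq⟩, hR'⟩ := (hR p q hpq).2.2.1 (.send a) p' trivial hp
    exact ⟨q' + v', (hqm.add_right v).trans <| .head (Step.comm hmn hv) (hnq.add_right v'),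
      p', q', v', hR', rfl, rfl⟩
  · obtain ⟨q', hq, hR'⟩ := (hR p q hpq).2.2.2 a p' hp
    rw [hv.eq_add_msg_of_send, ← add_assoc, add_right_comm]
    rw [← add_msg] at hq
    exact ⟨q' + v', hq.add_right v', p', q', v', hR', rfl, rfl⟩

theorem compClosure_of_recv (hR : IsSimulation R) (hpq : R p q) {a : ℕ} {w : State}
    (h : Step (p + v) (.recv a) w) :
    ∃ w', WeakTau ((q + v).1, atom a ::ₘ (q + v).2) w' ∧ compClosure R w w' := by
  rw [← add_msg, add_right_comm]
  rcases h.of_add with ⟨p', hp, rfl⟩ | ⟨v', hv, rfl⟩ | ⟨_, _, _, ⟨⟩, -⟩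
  · obtain ⟨q', hq, hR'⟩ := (hR p q hpq).2.2.2 a p' hp
    rw [← add_msg] at hq
    exact ⟨q' + v, hq.add_right v, p', q', v, hR', rfl, rfl⟩
  · exact ⟨q + v', .single (Step.comm (Step.send_msg q a) hv), p, q, v', hpq, rfl, rfl⟩

theorem compClosure (hR : IsSimulation R) : IsSimulation (compClosure R) := by
  rintro _ _ ⟨p, q, v, hpq, rfl, rfl⟩
  exact ⟨hR.compClosure_of_linear_eq_zero hpq, fun _ _ => hR.compClosure_of_eq_add hpq,
    fun _ _ => hR.compClosure_of_step hpq, fun _ _ => hR.compClosure_of_recv hpq⟩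

end IsSimulation

/-- the simulation preorder is compositional. -/
theorem simPre_compositional (s t : State) (h : SimPre s t) :
    ∀ u : State, SimPre (State.comp s u) (State.comp t u) := by
  intro u
  obtain ⟨R, hR, hst⟩ := h
  exact ⟨compClosure R, hR.compClosure, s, t, u, hst, rfl, rfl⟩
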